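/- For any matrix B ∈ ℝ^{M×N}, the generalized Huber function S_B : ℝ^N → ℝ is differentiable at every point of ℝ^N. -/
import Mathlib


open Matrix

/-- The ℓ₁ norm on `ℝ^N`. -/
noncomputable def norm1 {N : ℕ} (v : Fin N → ℝ) : ℝ := ∑ n, |v n|

/-- The squared Euclidean (ℓ₂) norm on `ℝ^M`. -/
def norm2sq {M : ℕ} (u : Fin M → ℝ) : ℝ := ∑ m, (u m) ^ 2

/-- The generalized Huber function
`S_B(x) = inf_v ( ‖v‖₁ + (1/2) ‖B(x - v)‖₂² )`. -/
noncomputable def genHuber {M N : ℕ} (B : Matrix (Fin M) (Fin N) ℝ) (x : Fin N → ℝ) : ℝ :=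
  ⨅ v : Fin N → ℝ, (norm1 v + (1 / 2) * norm2sq (B.mulVec (x - v)))

/-- The generalized MC (GMC) penalty `ψ_B(x) = ‖x‖₁ - S_B(x)`. -/
noncomputable def gmcPenalty {M N : ℕ} (B : Matrix (Fin M) (Fin N) ℝ) (x : Fin N → ℝ) : ℝ :=
  norm1 x - genHuber B x

open Finset

section GenHuberAux

/-- The objective of the infimum defining `genHuber`. -/
noncomputable def ghObj {M N : ℕ} (B : Matrix (Fin M) (Fin N) ℝ) (x v : Fin N → ℝ) : ℝ :=
  norm1 v + (1 / 2) * norm2sq (B.mulVec (x - v))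

/-- The dot product on `ℝ^M`. -/
def inner2 {M : ℕ} (u w : Fin M → ℝ) : ℝ := ∑ m, u m * w m

variable {M N : ℕ} (B : Matrix (Fin M) (Fin N) ℝ)

lemma norm1_nonneg {N : ℕ} (v : Fin N → ℝ) : 0 ≤ norm1 v :=
  Finset.sum_nonneg fun _ _ => abs_nonneg _

lemma norm2sq_nonneg {M : ℕ} (u : Fin M → ℝ) : 0 ≤ norm2sq u :=
  Finset.sum_nonneg fun _ _ => sq_nonneg _

lemma ghObj_nonneg (x v : Fin N → ℝ) : 0 ≤ ghObj B x v :=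
  add_nonneg (norm1_nonneg v) (by have := norm2sq_nonneg (B.mulVec (x - v)); linarith)

lemma ghObj_bdd (x : Fin N → ℝ) : BddBelow (Set.range (ghObj B x)) :=
  ⟨0, by rintro _ ⟨v, rfl⟩; exact ghObj_nonneg B x v⟩

lemma genHuber_eq (x : Fin N → ℝ) : genHuber B x = ⨅ v, ghObj B x v := rfl

lemma genHuber_le (x v : Fin N → ℝ) : genHuber B x ≤ ghObj B x v :=
  ciInf_le (ghObj_bdd B x) v

lemma genHuber_nonneg (x : Fin N → ℝ) : 0 ≤ genHuber B x :=
  le_ciInf fun v => ghObj_nonneg B x v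

lemma norm1_continuous {N : ℕ} : Continuous (norm1 (N := N)) :=
  continuous_finset_sum _ fun n _ => (continuous_apply n).abs

lemma ghObj_continuous (x : Fin N → ℝ) : Continuous (ghObj B x) := by
  apply Continuous.add norm1_continuous
  apply Continuous.mul continuous_const
  apply continuous_finset_sum _ fun m _ => ?_
  have : Continuous fun v : Fin N → ℝ => B.mulVec (x - v) m := by
    simp only [Matrix.mulVec, dotProduct]
    exact continuous_finset_sum _ fun n _ =>
      continuous_const.mul ((continuous_const.sub (continuous_apply n)))
  exact this.pow 2

lemma abs_le_norm1 {N : ℕ} (v : Fin N → ℝ) (n : Fin N) : |v n| ≤ norm1 v :=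
  Finset.single_le_sum (fun i _ => abs_nonneg (v i)) (mem_univ n)

/-- The infimum defining `genHuber` is attained. -/
lemma exists_minimizer (x : Fin N → ℝ) : ∃ v₀, ∀ v, ghObj B x v₀ ≤ ghObj B x v := by
  set c := genHuber B x with hc
  have hc0 : (0:ℝ) ≤ c := genHuber_nonneg B x
  obtain ⟨w, hw⟩ : ∃ w, ghObj B x w < c + 1 :=
    exists_lt_of_ciInf_lt (show (⨅ v, ghObj B x v) < c + 1 by
      rw [← genHuber_eq]; linarith)
  set K : Set (Fin N → ℝ) := {v | norm1 v ≤ c + 1} with hK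
  have hwK : w ∈ K := by
    have : norm1 w ≤ ghObj B x w := by
      have := norm2sq_nonneg (B.mulVec (x - w)); unfold ghObj; linarith
    exact le_trans this (le_of_lt hw)
  have hKc : IsCompact K := by
    apply Metric.isCompact_of_isClosed_isBounded
    · exact isClosed_le norm1_continuous continuous_const
    · apply Bornology.IsBounded.subset
        (Metric.isBounded_closedBall (x := (0 : Fin N → ℝ)) (r := c + 1))
      intro v hv
      rw [Metric.mem_closedBall, dist_zero_right]
      rw [pi_norm_le_iff_of_nonneg (by linarith)]
      exact fun n => le_trans (by simpa using abs_le_norm1 v n) hv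
  obtain ⟨v₀, hv₀K, hv₀⟩ := hKc.exists_isMinOn ⟨w, hwK⟩ ((ghObj_continuous B x).continuousOn)
  refine ⟨v₀, fun v => ?_⟩
  by_cases hv : v ∈ K
  · exact hv₀ hv
  · have h1 : ghObj B x v₀ ≤ ghObj B x w := hv₀ hwK
    have h2 : c + 1 < norm1 v := not_le.mp hv
    have : norm1 v ≤ ghObj B x v := by
      have := norm2sq_nonneg (B.mulVec (x - v)); unfold ghObj; linarith
    linarith

lemma norm2sq_add {M : ℕ} (u w : Fin M → ℝ) :
    norm2sq (u + w) = norm2sq u + 2 * inner2 u w + norm2sq w := by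
  unfold norm2sq inner2
  rw [Finset.mul_sum, ← Finset.sum_add_distrib, ← Finset.sum_add_distrib]
  exact Finset.sum_congr rfl fun m _ => by simp [Pi.add_apply]; ring

/-- `h ↦ ⟨u, B h⟩` as a linear map. -/
def ghL (u : Fin M → ℝ) : (Fin N → ℝ) →ₗ[ℝ] ℝ where
  toFun h := inner2 u (B.mulVec h)
  map_add' a b := by
    simp only [Matrix.mulVec_add, inner2, Pi.add_apply, mul_add, Finset.sum_add_distrib]
  map_smul' c a := by
    simp only [Matrix.mulVec_smul, inner2, Pi.smul_apply, smul_eq_mul, RingHom.id_apply,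
      Finset.mul_sum]
    exact Finset.sum_congr rfl fun m _ => by ring

/-- Bound `norm2sq (B h) ≤ K * ‖h‖²` in the sup norm. -/
lemma norm2sq_mulVec_le (h : Fin N → ℝ) :
    norm2sq (B.mulVec h) ≤ (∑ m, (∑ n, |B m n|) ^ 2) * ‖h‖ ^ 2 := by
  rw [Finset.sum_mul]
  apply Finset.sum_le_sum
  intro m _
  have h1 : |B.mulVec h m| ≤ (∑ n, |B m n|) * ‖h‖ := by
    simp only [Matrix.mulVec, dotProduct]
    calc |∑ n, B m n * h n| ≤ ∑ n, |B m n * h n| := Finset.abs_sum_le_sum_abs _ _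
      _ ≤ ∑ n, |B m n| * ‖h‖ := by
          apply Finset.sum_le_sum; intro n _
          rw [abs_mul]
          exact mul_le_mul_of_nonneg_left (by simpa using norm_le_pi_norm h n) (abs_nonneg _)
      _ = (∑ n, |B m n|) * ‖h‖ := by rw [Finset.sum_mul]
  calc (B.mulVec h m) ^ 2 = |B.mulVec h m| ^ 2 := (sq_abs _).symm
    _ ≤ ((∑ n, |B m n|) * ‖h‖) ^ 2 := by
        apply pow_le_pow_left₀ (abs_nonneg _) h1
    _ = (∑ n, |B m n|) ^ 2 * ‖h‖ ^ 2 := by ring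

lemma ghObj_midpoint (x h v w : Fin N → ℝ) :
    2 * ghObj B x ((1/2 : ℝ) • (v + w)) ≤ ghObj B (x + h) v + ghObj B (x - h) w := by
  set a := B.mulVec (x + h - v) with ha
  set b := B.mulVec (x - h - w) with hb
  have hvec : x - (1/2 : ℝ) • (v + w) = (1/2 : ℝ) • ((x + h - v) + (x - h - w)) := by
    funext n
    simp only [Pi.sub_apply, Pi.add_apply, Pi.smul_apply, smul_eq_mul]
    ring
  have hmul : B.mulVec (x - (1/2 : ℝ) • (v + w)) = (1/2 : ℝ) • (a + b) := by
    rw [hvec, Matrix.mulVec_smul, Matrix.mulVec_add, ha, hb]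
  have h1 : norm1 ((1/2 : ℝ) • (v + w)) ≤ (norm1 v + norm1 w) / 2 := by
    unfold norm1
    calc ∑ n, |((1/2 : ℝ) • (v + w)) n| ≤ ∑ n, (|v n| + |w n|) / 2 := by
          apply Finset.sum_le_sum
          intro n _
          simp only [Pi.smul_apply, Pi.add_apply, smul_eq_mul, abs_mul]
          rw [abs_of_pos (by norm_num : (0:ℝ) < 1/2)]
          have := abs_add_le (v n) (w n)
          linarith
      _ = ((∑ n, |v n|) + ∑ n, |w n|) / 2 := by
          rw [← Finset.sum_add_distrib, Finset.sum_div]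
  have h2 : norm2sq ((1/2 : ℝ) • (a + b)) ≤ (norm2sq a + norm2sq b) / 2 := by
    unfold norm2sq
    calc ∑ m, (((1/2 : ℝ) • (a + b)) m) ^ 2 ≤ ∑ m, (a m ^ 2 + b m ^ 2) / 2 := by
          apply Finset.sum_le_sum
          intro m _
          simp only [Pi.smul_apply, Pi.add_apply, smul_eq_mul]
          nlinarith [sq_nonneg (a m - b m)]
      _ = ((∑ m, a m ^ 2) + ∑ m, b m ^ 2) / 2 := by
          rw [← Finset.sum_add_distrib, Finset.sum_div]
  unfold ghObj
  rw [hmul]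
  linarith

lemma genHuber_midpoint (x h : Fin N → ℝ) :
    2 * genHuber B x ≤ genHuber B (x + h) + genHuber B (x - h) := by
  rw [genHuber_eq B (x + h), genHuber_eq B (x - h)]
  have key : ∀ v w, 2 * genHuber B x ≤ ghObj B (x + h) v + ghObj B (x - h) w := by
    intro v w
    calc 2 * genHuber B x ≤ 2 * ghObj B x ((1/2 : ℝ) • (v + w)) := by
          have := genHuber_le B x ((1/2 : ℝ) • (v + w)); linarith
      _ ≤ _ := ghObj_midpoint B x h v w
  have step1 : ∀ v, 2 * genHuber B x - ghObj B (x + h) v ≤ ⨅ w, ghObj B (x - h) w := by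
    intro v
    apply le_ciInf
    intro w
    linarith [key v w]
  have step2 : 2 * genHuber B x - (⨅ w, ghObj B (x - h) w) ≤ ⨅ v, ghObj B (x + h) v := by
    apply le_ciInf
    intro v
    linarith [step1 v]
  linarith

end GenHuberAux

/-- The generalized Huber function is differentiable at every point. -/
theorem genHuber_differentiable {M N : ℕ} (B : Matrix (Fin M) (Fin N) ℝ) :
    ∀ x : Fin N → ℝ, DifferentiableAt ℝ (genHuber B) x := by
  intro x
  obtain ⟨v₀, hv₀⟩ := exists_minimizer B x
  set u := B.mulVec (x - v₀) with hu
  have hcx : genHuber B x = ghObj B x v₀ :=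
    le_antisymm (genHuber_le B x v₀) (le_ciInf hv₀)
  have upper : ∀ h, genHuber B (x + h) ≤
      genHuber B x + inner2 u (B.mulVec h) + (1/2) * norm2sq (B.mulVec h) := by
    intro h
    have h1 := genHuber_le B (x + h) v₀
    have h2 : ghObj B (x + h) v₀ =
        ghObj B x v₀ + inner2 u (B.mulVec h) + (1/2) * norm2sq (B.mulVec h) := by
      unfold ghObj
      have hxv : x + h - v₀ = (x - v₀) + h := by abel
      rw [hxv, Matrix.mulVec_add, ← hu, norm2sq_add]
      ring
    rw [hcx]; linarith
  have lower : ∀ h, genHuber B x + inner2 u (B.mulVec h) - (1/2) * norm2sq (B.mulVec h)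
      ≤ genHuber B (x + h) := by
    intro h
    have hm := genHuber_midpoint B x h
    have hup := upper (-h)
    have e0 : x + -h = x - h := by abel
    have e1 : B.mulVec (-h) = -(B.mulVec h) := by
      rw [show (-h : Fin N → ℝ) = (-1 : ℝ) • h by funext n; simp, Matrix.mulVec_smul]
      funext m; simp
    have e2 : inner2 u (-(B.mulVec h)) = - inner2 u (B.mulVec h) := by
      simp [inner2, mul_neg, Finset.sum_neg_distrib]
    have e3 : norm2sq (-(B.mulVec h)) = norm2sq (B.mulVec h) := by
      simp [norm2sq]
    rw [e0, e1, e2, e3] at hup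
    linarith
  set K := ∑ m, (∑ n, |B m n|) ^ 2 with hK
  have hK0 : 0 ≤ K := Finset.sum_nonneg fun _ _ => sq_nonneg _
  have err : ∀ h, |genHuber B (x + h) - genHuber B x - inner2 u (B.mulVec h)|
      ≤ (1/2) * K * ‖h‖ ^ 2 := by
    intro h
    have hq := norm2sq_mulVec_le B h
    have hq0 := norm2sq_nonneg (B.mulVec h)
    rw [abs_le]
    constructor
    · linarith [lower h]
    · linarith [upper h]
  apply HasFDerivAt.differentiableAt (f' := LinearMap.toContinuousLinearMap (ghL B u))
  rw [hasFDerivAt_iff_isLittleO_nhds_zero, Asymptotics.isLittleO_iff]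
  intro ε hε
  have hδ : 0 < ε / (K/2 + 1) := by positivity
  rw [Metric.eventually_nhds_iff]
  refine ⟨ε / (K/2 + 1), hδ, fun {h} hh => ?_⟩
  rw [dist_zero_right] at hh
  have hL : (LinearMap.toContinuousLinearMap (ghL B u)) h = inner2 u (B.mulVec h) := rfl
  rw [hL, Real.norm_eq_abs]
  have hE := err h
  have hn0 : (0:ℝ) ≤ ‖h‖ := norm_nonneg h
  have h1 : (K/2) * ‖h‖ ≤ (K/2) * (ε / (K/2 + 1)) :=
    mul_le_mul_of_nonneg_left hh.le (by linarith)
  have h2 : (K/2) * (ε / (K/2 + 1)) ≤ ε := by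
    rw [mul_div_assoc', div_le_iff₀ (by linarith)]
    nlinarith
  nlinarith [sq_nonneg ‖h‖]
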